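/- For n ≥ 2 let P_n be the polytope {x ∈ ℝ^{n²}_{≥0} : Σ_{e∈P} x(e) = 1 for all perfect matchings P of K_{n,n}}, with vertices m_{v₁},…,m_{v_n}, m_{w₁},…,m_{w_n} (indicator vectors of vertex stars). Then the toric ideal I(P_n) is not generated by its elements of degree at most n−1. In particular, s = m_{v₁}+⋯+m_{v_n} = m_{w₁}+⋯+m_{w_n} yields a degree-n binomial relation t_{v₁}⋯t_{v_n} − t_{w₁}⋯t_{w_n} not in the ideal generated by lower-degree elements, because m_{v_i} + m_{w_j} does not divide s in S(P_n) for any i, j. -/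

import Mathlib

/-!
The map `t_k ↦ χ^{(m_k, 1)}` is graded by the toric degree `Σ d_k (m_k, 1)` of an exponent vector
`d`, so an element of the toric ideal has vanishing coefficient sum over every fibre of that
degree. A proper divisor of `t_{v₁} ⋯ t_{v_n}` is the only monomial of its toric degree: a missing
`v_{i₀}` leaves the edges `(i₀, j)` with multiplicity zero, which excludes every `w_j`. Hence an
element of `I(P_n)` of degree `< n` has no term dividing `t_{v₁} ⋯ t_{v_n}`, and neither has
anything in the ideal it generates — unlike `t_{v₁} ⋯ t_{v_n} - t_{w₁} ⋯ t_{w_n}`, whose two sides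
both have toric degree `(𝟙, n)`.
-/

open BigOperators Pointwise

/-- The polytope `P_n ⊆ ℝ^{n²}`. -/
def matchingPolytope (n : ℕ) : Set (Fin n × Fin n → ℝ) :=
  {x | (∀ e, 0 ≤ x e) ∧ ∀ σ : Equiv.Perm (Fin n), ∑ i, x (i, σ i) = 1}

/-- The indicator vector of the star of a vertex of `K_{n,n}`. -/
def vertexStar (n : ℕ) : Fin n ⊕ Fin n → Fin n × Fin n → ℤ
  | .inl i => fun e => if e.1 = i then 1 else 0
  | .inr j => fun e => if e.2 = j then 1 else 0

/-- The toric ideal associated to a family of lattice points `m : ι → M`. -/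
noncomputable def toricIdeal {ι M : Type} [AddCommMonoid M] (m : ι → M) :
    Ideal (MvPolynomial ι ℂ) :=
  RingHom.ker (MvPolynomial.aeval
    (fun i => (AddMonoidAlgebra.single ((m i, 1) : M × ℤ) (1 : ℂ) :
      AddMonoidAlgebra ℂ (M × ℤ)))).toRingHom

namespace MvPolynomial

variable {σ R : Type*} [CommSemiring R]

theorem coeff_eq_zero_of_mem_span_of_forall_le {S : Set (MvPolynomial σ R)} {a : σ →₀ ℕ}
    (hS : ∀ p ∈ S, ∀ b ≤ a, coeff b p = 0) {p : MvPolynomial σ R} (hp : p ∈ Ideal.span S) :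
    coeff a p = 0 := by
  have hle : Ideal.span S ≤ Ideal.span ((fun b => monomial b (1 : R)) '' {b | ¬ b ≤ a}) := by
    rw [Ideal.span_le]
    intro q hq
    rw [SetLike.mem_coe, mem_ideal_span_monomial_image]
    exact fun b hb => ⟨b, fun hba => mem_support_iff.mp hb (hS q hq b hba), le_rfl⟩
  by_contra ha
  obtain ⟨b, hba, hb⟩ := mem_ideal_span_monomial_image.mp (hle hp) a (mem_support_iff.mpr ha)
  exact hba hb

end MvPolynomial

open MvPolynomial

section Toric

variable {ι M : Type} [AddCommMonoid M] (m : ι → M)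

noncomputable def toricDegree : (ι →₀ ℕ) →+ M × ℤ :=
  Finsupp.liftAddHom fun k => multiplesHom (M × ℤ) (m k, 1)

@[simp]
lemma toricDegree_single (k : ι) (e : ℕ) : toricDegree m (Finsupp.single k e) = e • (m k, 1) :=
  Finsupp.liftAddHom_apply_single _ _ _

noncomputable def toricMap : MvPolynomial ι ℂ →ₐ[ℂ] AddMonoidAlgebra ℂ (M × ℤ) :=
  aeval fun k => AddMonoidAlgebra.single (m k, 1) 1

lemma mem_toricIdeal_iff {g : MvPolynomial ι ℂ} : g ∈ toricIdeal m ↔ toricMap m g = 0 :=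
  RingHom.mem_ker

lemma toricMap_monomial (d : ι →₀ ℕ) (c : ℂ) :
    toricMap m (monomial d c) = AddMonoidAlgebra.single (toricDegree m d) c := by
  rw [toricMap, aeval_monomial, Finsupp.prod]
  simp only [AddMonoidAlgebra.single_pow, one_pow]
  rw [AddMonoidAlgebra.prod_single, Finset.prod_const_one, ← Algebra.smul_def,
    AddMonoidAlgebra.smul_single', mul_one]
  rfl

lemma monomial_sub_monomial_mem_toricIdeal {a b : ι →₀ ℕ}
    (h : toricDegree m a = toricDegree m b) (c : ℂ) :
    monomial a c - monomial b c ∈ toricIdeal m := by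
  rw [mem_toricIdeal_iff, map_sub, toricMap_monomial, toricMap_monomial, h, sub_self]

/-- The coefficient of `toricMap m g` at `toricDegree m a` is the sum of the coefficients of `g`
over the fibre of `a`. -/
lemma coeff_eq_zero_of_mem_toricIdeal {g : MvPolynomial ι ℂ} (hg : g ∈ toricIdeal m)
    {a : ι →₀ ℕ} (ha : ∀ d, toricDegree m d = toricDegree m a → d = a) : coeff a g = 0 := by
  have hcoeff := congr_arg (fun f => f.coeff (toricDegree m a)) ((mem_toricIdeal_iff m).mp hg)
  conv at hcoeff => lhs; rw [g.as_sum, map_sum]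
  simp only [toricMap_monomial, AddMonoidAlgebra.coeff_sum, Finsupp.finsetSum_apply,
    AddMonoidAlgebra.coeff_single, AddMonoidAlgebra.coeff_zero, Finsupp.coe_zero,
    Pi.zero_apply] at hcoeff
  rwa [Finset.sum_eq_single a (fun d _ hda => Finsupp.single_eq_of_ne' (mt (ha d) hda))
    (fun hga => by rw [Finsupp.single_eq_same, notMem_support_iff.mp hga]),
    Finsupp.single_eq_same] at hcoeff

end Toric

namespace vertexStar

variable (n : ℕ)

lemma sum_inl : ∑ i : Fin n, vertexStar n (Sum.inl i) = 1 := by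
  funext e
  simp [vertexStar]

lemma sum_inr : ∑ j : Fin n, vertexStar n (Sum.inr j) = 1 := by
  funext e
  simp [vertexStar]

variable {n}

lemma toricDegree_fst_apply (d : Fin n ⊕ Fin n →₀ ℕ) (i j : Fin n) :
    (toricDegree (vertexStar n) d).1 (i, j) = d (Sum.inl i) + d (Sum.inr j) := by
  induction d using Finsupp.induction_linear with
  | zero => simp
  | add d d' hd hd' => simp only [map_add, Prod.fst_add, Pi.add_apply, hd, hd',
      Finsupp.add_apply]; push_cast; ring
  | single k e => cases k <;> simp [vertexStar, Finsupp.single_apply, eq_comm]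

/-- The `(i₀, j)`-coordinates force `d (inr j) = 0`, then the `(i, i)`-coordinates pin down
`d (inl i)`. -/
lemma eq_of_toricDegree_eq {a d : Fin n ⊕ Fin n →₀ ℕ} (ha : ∀ j, a (Sum.inr j) = 0) {i₀ : Fin n}
    (hi₀ : a (Sum.inl i₀) = 0)
    (h : toricDegree (vertexStar n) d = toricDegree (vertexStar n) a) : d = a := by
  have hcoord (i j : Fin n) : (d (Sum.inl i) : ℤ) + d (Sum.inr j) = a (Sum.inl i) + a (Sum.inr j) := by
    rw [← toricDegree_fst_apply, ← toricDegree_fst_apply, h]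
  have hd (j : Fin n) : d (Sum.inr j) = 0 := by
    have := hcoord i₀ j
    rw [hi₀, ha j] at this
    omega
  ext (i | j)
  · have := hcoord i i
    rw [hd, ha] at this
    omega
  · rw [hd, ha]

end vertexStar

section Binomial

variable (n : ℕ)

noncomputable def vExponent : Fin n ⊕ Fin n →₀ ℕ := ∑ i : Fin n, Finsupp.single (Sum.inl i) 1

noncomputable def wExponent : Fin n ⊕ Fin n →₀ ℕ := ∑ j : Fin n, Finsupp.single (Sum.inr j) 1

lemma prod_X_inl_eq_monomial :
    ∏ i : Fin n, X (Sum.inl i) = (monomial (vExponent n) 1 : MvPolynomial (Fin n ⊕ Fin n) ℂ) := by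
  rw [vExponent, monomial_sum_one]
  rfl

lemma prod_X_inr_eq_monomial :
    ∏ j : Fin n, X (Sum.inr j) = (monomial (wExponent n) 1 : MvPolynomial (Fin n ⊕ Fin n) ℂ) := by
  rw [wExponent, monomial_sum_one]
  rfl

@[simp] lemma vExponent_inl (i : Fin n) : vExponent n (Sum.inl i) = 1 := by
  simp [vExponent, Finsupp.finsetSum_apply, Finsupp.single_apply]

@[simp] lemma vExponent_inr (j : Fin n) : vExponent n (Sum.inr j) = 0 := by
  simp [vExponent, Finsupp.finsetSum_apply]

@[simp] lemma wExponent_inl (i : Fin n) : wExponent n (Sum.inl i) = 0 := by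
  simp [wExponent, Finsupp.finsetSum_apply]

lemma degree_vExponent : (vExponent n).degree = n := by
  simp [vExponent, Finsupp.degree_single]

lemma toricDegree_vExponent_eq_wExponent :
    toricDegree (vertexStar n) (vExponent n) = toricDegree (vertexStar n) (wExponent n) := by
  simp only [vExponent, wExponent, map_sum, toricDegree_single, one_smul]
  ext : 1 <;> simp [Prod.fst_sum, Prod.snd_sum, vertexStar.sum_inl, vertexStar.sum_inr]

lemma vExponent_ne_wExponent (hn : 0 < n) : vExponent n ≠ wExponent n := fun h => by
  simpa using DFunLike.congr_fun h (Sum.inl ⟨0, hn⟩)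

/-- A proper divisor of `t_{v₁} ⋯ t_{v_n}` misses some `t_{v_{i₀}}`, so it is alone in its toric
degree; the monomial itself has degree `n`. -/
lemma coeff_eq_zero_of_le_vExponent {g : MvPolynomial (Fin n ⊕ Fin n) ℂ}
    (hg : g ∈ toricIdeal (vertexStar n)) (hdeg : g.totalDegree < n) {b : Fin n ⊕ Fin n →₀ ℕ}
    (hb : b ≤ vExponent n) : coeff b g = 0 := by
  rcases eq_or_ne b (vExponent n) with rfl | hne
  · apply coeff_eq_zero_of_totalDegree_lt
    rwa [← Finsupp.degree_apply, degree_vExponent]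
  obtain ⟨k, hk⟩ := Finsupp.ne_iff.mp hne
  have hb_lt : b k < vExponent n k := lt_of_le_of_ne (hb k) hk
  have hb_inr (j : Fin n) : b (Sum.inr j) = 0 := by simpa using hb (Sum.inr j)
  obtain i₀ | j := k
  · exact coeff_eq_zero_of_mem_toricIdeal _ hg fun d =>
      vertexStar.eq_of_toricDegree_eq hb_inr (by simpa using hb_lt)
  · simp at hb_lt

lemma binomial_notMem_span_lowDegree (hn : 0 < n) :
    (monomial (vExponent n) 1 - monomial (wExponent n) 1 : MvPolynomial (Fin n ⊕ Fin n) ℂ) ∉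
      Ideal.span {p | p ∈ toricIdeal (vertexStar n) ∧ p.totalDegree ≤ n - 1} := fun h => by
  have := coeff_eq_zero_of_mem_span_of_forall_le
    (fun p hp b hb => coeff_eq_zero_of_le_vExponent n hp.1 (by have := hp.2; omega) hb) h
  simp [coeff_monomial, (vExponent_ne_wExponent n hn).symm] at this

end Binomial

/-- `m_{v_i} + m_{w_j}` does not divide `Σ m_{v_l}` in `S(P_n)`: the quotient would be `-1` at the
edge `(i, j)`, while `(n - 2) • P_n` lies in the nonnegative orthant. -/
lemma sum_sub_vertexStar_notMem_smul_matchingPolytope {n : ℕ} (hn : 2 ≤ n) (i j : Fin n) :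
    ¬ ((fun e => (((∑ l : Fin n, vertexStar n (Sum.inl l) e)
          - vertexStar n (Sum.inl i) e - vertexStar n (Sum.inr j) e : ℤ) : ℝ))
        ∈ ((n : ℝ) - 2) • matchingPolytope n) := by
  rintro ⟨x, hx, hsx⟩
  have hij : ((n : ℝ) - 2) * x (i, j) = -1 := by simpa [vertexStar] using congr_fun hsx (i, j)
  have hn' : (2 : ℝ) ≤ n := by exact_mod_cast hn
  nlinarith [hx.1 (i, j)]

/-- the toric ideal of `P_n` is not generated in degree at most `n−1`:
the degree-`n` binomial `t_{v₁}⋯t_{v_n} − t_{w₁}⋯t_{w_n}` lies in `I(P_n)` but not in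
the ideal generated by the elements of `I(P_n)` of degree at most `n−1`; moreover no
`m_{v_i} + m_{w_j}` divides `s = Σ m_{v_i}` in `S(P_n)`. -/
theorem matchingPolytope_toricIdeal_not_generated_in_low_degree (n : ℕ) (hn : 2 ≤ n) :
    ((∏ i : Fin n, MvPolynomial.X (Sum.inl i) -
        ∏ j : Fin n, MvPolynomial.X (Sum.inr j) : MvPolynomial (Fin n ⊕ Fin n) ℂ)
      ∈ toricIdeal (vertexStar n)) ∧
    ((∏ i : Fin n, MvPolynomial.X (Sum.inl i) -
        ∏ j : Fin n, MvPolynomial.X (Sum.inr j) : MvPolynomial (Fin n ⊕ Fin n) ℂ)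
      ∉ Ideal.span {p : MvPolynomial (Fin n ⊕ Fin n) ℂ |
          p ∈ toricIdeal (vertexStar n) ∧ p.totalDegree ≤ n - 1}) ∧
    (toricIdeal (vertexStar n)
      ≠ Ideal.span {p : MvPolynomial (Fin n ⊕ Fin n) ℂ |
          p ∈ toricIdeal (vertexStar n) ∧ p.totalDegree ≤ n - 1}) ∧
    ∀ i j : Fin n,
      ¬ ((fun e => (((∑ l : Fin n, vertexStar n (Sum.inl l) e)
            - vertexStar n (Sum.inl i) e - vertexStar n (Sum.inr j) e : ℤ) : ℝ))
          ∈ ((n : ℝ) - 2) • matchingPolytope n) := by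
  rw [prod_X_inl_eq_monomial, prod_X_inr_eq_monomial]
  have hmem := monomial_sub_monomial_mem_toricIdeal _ (toricDegree_vExponent_eq_wExponent n) 1
  have hnotMem := binomial_notMem_span_lowDegree n (by omega)
  exact ⟨hmem, hnotMem, fun h => hnotMem (h ▸ hmem),
    sum_sub_vertexStar_notMem_smul_matchingPolytope hn⟩
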